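/- Let (V, ω) be a complex symplectic vector space of dimension 2n and let α, β, γ be Lagrangian subspaces of V. Then dim(α ∩ β) + dim(α ∩ γ) + dim(β ∩ γ) ≤ n + 2·dim(α ∩ β ∩ γ), and equality holds if and only if α ∩ β + α ∩ γ = α ∩ (β + γ). -/

import Mathlib

open Module Submodule

/-- The annihilator of a subspace `lam` with respect to a sesquilinear form `ω`
(linear in the first variable, conjugate-linear in the second). -/
def symplAnn {V : Type*} [AddCommGroup V] [Module ℂ V]
    (ω : V →ₗ[ℂ] V →ₗ⋆[ℂ] ℂ) (lam : Submodule ℂ V) : Submodule ℂ V where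
  carrier := {x | ∀ y ∈ lam, ω x y = 0}
  add_mem' := by
    intro a b ha hb y hy
    simp [ha y hy, hb y hy]
  zero_mem' := by
    intro y hy
    simp
  smul_mem' := by
    intro c x hx y hy
    simp [hx y hy]

/-!
The real part of `ω` is a nondegenerate real bilinear form whose orthogonal complements are
the complex annihilators, so `dim λ^ω = 2n - dim λ`. Since `(β + γ)^ω = β ∩ γ` and
`(α + β + γ)^ω = α ∩ β ∩ γ` for Lagrangians, two applications of the modular law give
`dim (α ∩ β) + dim (α ∩ γ) + dim (β ∩ γ) + d = n + 2 dim (α ∩ β ∩ γ)`, where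
`d = dim (α ∩ (β + γ)) - dim (α ∩ β + α ∩ γ) ≥ 0` vanishes exactly when the inclusion
`α ∩ β + α ∩ γ ⊆ α ∩ (β + γ)` is an equality.
-/

section SymplAnn

variable {V : Type*} [AddCommGroup V] [Module ℂ V] (ω : V →ₗ[ℂ] V →ₗ⋆[ℂ] ℂ)

lemma mem_symplAnn {x : V} {lam : Submodule ℂ V} :
    x ∈ symplAnn ω lam ↔ ∀ y ∈ lam, ω x y = 0 := Iff.rfl

lemma symplAnn_sup (p q : Submodule ℂ V) :
    symplAnn ω (p ⊔ q) = symplAnn ω p ⊓ symplAnn ω q := by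
  ext x
  simp only [mem_inf, mem_symplAnn]
  refine ⟨fun h => ⟨fun y hy => h y (mem_sup_left hy), fun y hy => h y (mem_sup_right hy)⟩, ?_⟩
  rintro ⟨hp, hq⟩ y hy
  obtain ⟨a, ha, b, hb, rfl⟩ := mem_sup.1 hy
  simp [hp a ha, hq b hb]

noncomputable def reForm : LinearMap.BilinForm ℝ V :=
  LinearMap.mk₂ ℝ (fun x y => (ω x y).re)
    (fun x x' y => by simp)
    (fun r x y => by rw [← Complex.coe_smul]; simp)
    (fun x y y' => by simp)
    (fun r x y => by rw [← Complex.coe_smul, LinearMap.map_smulₛₗ]; simp)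

@[simp] lemma reForm_apply (x y : V) : reForm ω x y = (ω x y).re := rfl

/-- `ω x (I • y) = -I * ω x y`, whose real part is the imaginary part of `ω x y`. -/
lemma forall_reForm_eq_zero_iff {x : V} {lam : Submodule ℂ V} :
    (∀ y ∈ lam, reForm ω x y = 0) ↔ ∀ y ∈ lam, ω x y = 0 := by
  refine ⟨fun h y hy => Complex.ext (h y hy) ?_, fun h y hy => by simp [h y hy]⟩
  simpa [LinearMap.map_smulₛₗ, Complex.conj_I, Complex.mul_re] using h _ (lam.smul_mem Complex.I hy)

lemma orthogonal_flip_reForm (lam : Submodule ℂ V) :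
    (reForm ω).flip.orthogonal (lam.restrictScalars ℝ) = (symplAnn ω lam).restrictScalars ℝ := by
  ext x
  exact forall_reForm_eq_zero_iff ω

lemma reForm_nondegenerate [FiniteDimensional ℂ V]
    (hNd : ∀ x : V, (∀ y : V, ω x y = 0) → x = 0) : (reForm ω).Nondegenerate := by
  have : FiniteDimensional ℝ V := .complexToReal V
  refine .ofSeparatingLeft fun x h => hNd x fun y => ?_
  exact (forall_reForm_eq_zero_iff ω (lam := ⊤)).1 (fun y _ => h y) y mem_top

lemma finrank_real_restrictScalars (p : Submodule ℂ V) :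
    finrank ℝ (p.restrictScalars ℝ) = 2 * finrank ℂ p :=
  ((restrictScalarsEquiv ℝ ℂ V p).restrictScalars ℝ).finrank_eq.trans (finrank_real_of_complex p)

lemma finrank_symplAnn_add_finrank [FiniteDimensional ℂ V]
    (hNd : ∀ x : V, (∀ y : V, ω x y = 0) → x = 0) (lam : Submodule ℂ V) :
    finrank ℂ (symplAnn ω lam) + finrank ℂ lam = finrank ℂ V := by
  have : FiniteDimensional ℝ V := .complexToReal V
  have h := LinearMap.BilinForm.finrank_orthogonal
    (LinearMap.BilinForm.nondegenerate_flip_iff.2 (reForm_nondegenerate ω hNd))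
    (lam.restrictScalars ℝ)
  rw [orthogonal_flip_reForm, finrank_real_restrictScalars, finrank_real_restrictScalars,
    finrank_real_of_complex] at h
  have : finrank ℂ lam ≤ finrank ℂ V := finrank_le lam
  omega

end SymplAnn

section Lagrangian

variable {V : Type*} [AddCommGroup V] [Module ℂ V] [FiniteDimensional ℂ V]
  {ω : V →ₗ[ℂ] V →ₗ⋆[ℂ] ℂ} (hNd : ∀ x : V, (∀ y : V, ω x y = 0) → x = 0)
  {α β γ : Submodule ℂ V}
include hNd

lemma two_mul_finrank_of_eq_symplAnn (hα : α = symplAnn ω α) :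
    2 * finrank ℂ α = finrank ℂ V := by
  have h := finrank_symplAnn_add_finrank ω hNd α
  rw [← hα] at h
  omega

lemma finrank_inf_add_finrank_inf_add_finrank_inf_of_eq_symplAnn
    (hα : α = symplAnn ω α) (hβ : β = symplAnn ω β) (hγ : γ = symplAnn ω γ) :
    finrank ℂ (α ⊓ β : Submodule ℂ V) + finrank ℂ (α ⊓ γ : Submodule ℂ V) +
        finrank ℂ (β ⊓ γ : Submodule ℂ V) + finrank ℂ (α ⊓ (β ⊔ γ) : Submodule ℂ V) =
      finrank ℂ α + 2 * finrank ℂ (α ⊓ β ⊓ γ : Submodule ℂ V) +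
        finrank ℂ ((α ⊓ β) ⊔ (α ⊓ γ) : Submodule ℂ V) := by
  have hbc := finrank_symplAnn_add_finrank ω hNd (β ⊔ γ)
  rw [symplAnn_sup, ← hβ, ← hγ] at hbc
  have habc := finrank_symplAnn_add_finrank ω hNd (α ⊔ β ⊔ γ)
  rw [symplAnn_sup, symplAnn_sup, ← hα, ← hβ, ← hγ] at habc
  have hmod₁ := finrank_sup_add_finrank_inf_eq (α ⊓ β) (α ⊓ γ)
  rw [← inf_inf_distrib_left, ← inf_assoc] at hmod₁
  have hmod₂ := finrank_sup_add_finrank_inf_eq α (β ⊔ γ)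
  rw [← sup_assoc] at hmod₂
  omega

end Lagrangian

theorem stmt9_general {V : Type*} [AddCommGroup V] [Module ℂ V] [FiniteDimensional ℂ V]
    (n : ℕ) (hdim : Module.finrank ℂ V = 2 * n)
    (ω : V →ₗ[ℂ] V →ₗ⋆[ℂ] ℂ)
    (hNd : ∀ x : V, (∀ y : V, ω x y = 0) → x = 0)
    (α β γ : Submodule ℂ V)
    (hα : α = symplAnn ω α) (hβ : β = symplAnn ω β) (hγ : γ = symplAnn ω γ) :
    finrank ℂ (α ⊓ β : Submodule ℂ V) + finrank ℂ (α ⊓ γ : Submodule ℂ V) +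
        finrank ℂ (β ⊓ γ : Submodule ℂ V) ≤
      n + 2 * finrank ℂ (α ⊓ β ⊓ γ : Submodule ℂ V) ∧
    (finrank ℂ (α ⊓ β : Submodule ℂ V) + finrank ℂ (α ⊓ γ : Submodule ℂ V) +
        finrank ℂ (β ⊓ γ : Submodule ℂ V) =
      n + 2 * finrank ℂ (α ⊓ β ⊓ γ : Submodule ℂ V) ↔
      (α ⊓ β) ⊔ (α ⊓ γ) = α ⊓ (β ⊔ γ)) := by
  have hn : finrank ℂ α = n := by
    have := two_mul_finrank_of_eq_symplAnn hNd hα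
    omega
  have hid := finrank_inf_add_finrank_inf_add_finrank_inf_of_eq_symplAnn hNd hα hβ hγ
  have hle : (α ⊓ β) ⊔ (α ⊓ γ) ≤ α ⊓ (β ⊔ γ) := le_inf_sup
  have hmono := finrank_mono hle
  refine ⟨by omega, fun heq => eq_of_le_of_finrank_le hle (by omega), fun heq => ?_⟩
  rw [heq] at hid
  omega

theorem stmt9 {V : Type*} [AddCommGroup V] [Module ℂ V] [FiniteDimensional ℂ V]
    (n : ℕ) (hdim : Module.finrank ℂ V = 2 * n)
    (ω : V →ₗ[ℂ] V →ₗ⋆[ℂ] ℂ)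
    (hSkew : ∀ x y : V, ω y x = -(starRingEnd ℂ) (ω x y))
    (hNd : ∀ x : V, (∀ y : V, ω x y = 0) → x = 0)
    (α β γ : Submodule ℂ V)
    (hα : α = symplAnn ω α) (hβ : β = symplAnn ω β) (hγ : γ = symplAnn ω γ) :
    finrank ℂ (α ⊓ β : Submodule ℂ V) + finrank ℂ (α ⊓ γ : Submodule ℂ V) +
        finrank ℂ (β ⊓ γ : Submodule ℂ V) ≤
      n + 2 * finrank ℂ (α ⊓ β ⊓ γ : Submodule ℂ V) ∧
    (finrank ℂ (α ⊓ β : Submodule ℂ V) + finrank ℂ (α ⊓ γ : Submodule ℂ V) +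
        finrank ℂ (β ⊓ γ : Submodule ℂ V) =
      n + 2 * finrank ℂ (α ⊓ β ⊓ γ : Submodule ℂ V) ↔
      (α ⊓ β) ⊔ (α ⊓ γ) = α ⊓ (β ⊔ γ)) :=
  stmt9_general n hdim ω hNd α β γ hα hβ hγ
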